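/- Let d ≥ 2 and let p, k be natural numbers with 1 ≤ p < k and k + p odd, and set β = (k−p−1)/2. If x, y ∈ T and x₁ ≤ y₁, then |y₁ − p − x₁| + ∑_{i=2}^d |y_i − x_i| ≤ k; in particular x ∈ N(y,p,k). -/

import Mathlib

open Finset

/-- The L1 norm on the integer lattice `Fin d → ℤ`. -/
def norm1 {d : ℕ} (x : Fin d → ℤ) : ℤ := ∑ i, |x i|

/-- The first standard basis vector of `Fin d → ℤ`. -/
def e1 {d : ℕ} : Fin d → ℤ := fun i => if (i : ℕ) = 0 then 1 else 0

/-- `inN p k x y` means `y` belongs to the displaced distance-`k` neighborhood `N(x, p, k)`,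
i.e. `‖y − (x + p·e₁)‖₁ ≤ k` or `‖y − (x − p·e₁)‖₁ ≤ k`. -/
def inN {d : ℕ} (p k : ℕ) (x y : Fin d → ℤ) : Prop :=
  norm1 (y - (x + (p : ℤ) • e1)) ≤ (k : ℤ) ∨ norm1 (y - (x - (p : ℤ) • e1)) ≤ (k : ℤ)


/-- `∑_{i=2}^d |x_i|` : the sum of absolute values of all but the first coordinate. -/
def tailSum {d : ℕ} (x : Fin d → ℤ) : ℤ :=
  ∑ i ∈ Finset.univ.filter (fun i : Fin d => (i : ℕ) ≠ 0), |x i|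


/-- The `j`-th coordinate (0-indexed) of a lattice point, or `0` if out of range. -/
def coord {d : ℕ} (x : Fin d → ℤ) (j : ℕ) : ℤ := if h : j < d then x ⟨j, h⟩ else 0


/-- The set `T = { x : −(p−1) ≤ x₁ ≤ p, 1 ≤ x₂ ≤ β, and ∑_{i=2}^d |x_i| = β+1 }`. -/
def Tset (d : ℕ) (p β : ℤ) : Set (Fin d → ℤ) :=
  {x | -(p - 1) ≤ coord x 0 ∧ coord x 0 ≤ p ∧ 1 ≤ coord x 1 ∧ coord x 1 ≤ β ∧
       tailSum x = β + 1}

/-!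
With `δ = y₁ - x₁ ∈ [0, 2p - 1]` we have `|δ - p| ≤ p`. The triangle inequality is applied only to
the coordinates `i ≥ 3`, where `x` and `y` carry mass `β + 1 - x₂` and `β + 1 - y₂`; together with
the second coordinate this gives `|y₂ - x₂| + 2β + 2 - x₂ - y₂ = 2β + 2 - 2 min(x₂, y₂) ≤ 2β`.
So the distance is at most `p + 2β = k - 1`.
-/

lemma coord_of_lt {d : ℕ} (x : Fin d → ℤ) {j : ℕ} (hj : j < d) : coord x j = x ⟨j, hj⟩ := by
  simp [coord, hj]

lemma norm1_eq_abs_add_tailSum {d : ℕ} (hd : 0 < d) (z : Fin d → ℤ) :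
    norm1 z = |z ⟨0, hd⟩| + tailSum z := by
  have hzero : univ.filter (fun i : Fin d => (i : ℕ) = 0) = {⟨0, hd⟩} := by
    ext i; simp [Fin.ext_iff]
  rw [norm1, tailSum, ← sum_filter_add_sum_filter_not univ (fun i : Fin d => (i : ℕ) = 0),
    hzero, sum_singleton]

lemma tailSum_sub_le {d : ℕ} (j : Fin d) (hj : (j : ℕ) ≠ 0) (x y : Fin d → ℤ) :
    tailSum (y - x) ≤ |y j - x j| + (tailSum y - |y j|) + (tailSum x - |x j|) := by
  set S := univ.filter (fun i : Fin d => (i : ℕ) ≠ 0)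
  have hjS : j ∈ S := by simp [S, hj]
  have hsplit (z : Fin d → ℤ) : tailSum z = |z j| + ∑ i ∈ S.erase j, |z i| :=
    (add_sum_erase S (fun i => |z i|) hjS).symm
  have htri : ∑ i ∈ S.erase j, |y i - x i| ≤ ∑ i ∈ S.erase j, |y i| + ∑ i ∈ S.erase j, |x i| := by
    rw [← sum_add_distrib]
    exact sum_le_sum fun i _ => abs_sub _ _
  rw [hsplit (y - x), hsplit y, hsplit x]
  simp only [Pi.sub_apply]
  linarith

lemma norm1_sub_sub_smul_e1 {d : ℕ} (hd : 0 < d) (p : ℤ) (x y : Fin d → ℤ) :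
    norm1 (x - (y - p • e1)) = |coord y 0 - p - coord x 0| + tailSum (y - x) := by
  rw [norm1_eq_abs_add_tailSum hd, coord_of_lt x hd, coord_of_lt y hd]
  congr 1
  · rw [← abs_neg]
    simp only [e1, Pi.sub_apply, Pi.smul_apply, if_true, smul_eq_mul, mul_one]
    ring_nf
  · refine sum_congr rfl fun i hi => ?_
    have hi0 : (i : ℕ) ≠ 0 := (mem_filter.mp hi).2
    simp [e1, hi0, abs_sub_comm]

theorem stmt13_general (d : ℕ) (hd : 2 ≤ d) (p k : ℕ)
    (β : ℤ) (hβ : 2 * β = (k : ℤ) - (p : ℤ) - 1)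
    (x y : Fin d → ℤ) (hx : x ∈ Tset d (p : ℤ) β) (hy : y ∈ Tset d (p : ℤ) β)
    (hxy : coord x 0 ≤ coord y 0) :
    |coord y 0 - (p : ℤ) - coord x 0| + tailSum (y - x) ≤ (k : ℤ) ∧ inN p k y x := by
  obtain ⟨hx0, -, hx1, -, hxβ⟩ := hx
  obtain ⟨-, hy0, hy1, -, hyβ⟩ := hy
  have h1 : 1 < d := by omega
  rw [coord_of_lt x h1] at hx1
  rw [coord_of_lt y h1] at hy1
  have hfirst : |coord y 0 - (p : ℤ) - coord x 0| ≤ p := abs_le.mpr ⟨by linarith, by linarith⟩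
  have hsecond : |y ⟨1, h1⟩ - x ⟨1, h1⟩| ≤ y ⟨1, h1⟩ + x ⟨1, h1⟩ - 2 :=
    abs_sub_le_iff.mpr ⟨by linarith, by linarith⟩
  have htail := tailSum_sub_le ⟨1, h1⟩ one_ne_zero x y
  rw [abs_of_pos (by linarith : 0 < y ⟨1, h1⟩), abs_of_pos (by linarith : 0 < x ⟨1, h1⟩)] at htail
  have hdist : |coord y 0 - (p : ℤ) - coord x 0| + tailSum (y - x) ≤ (k : ℤ) := by linarith
  exact ⟨hdist, Or.inr ((norm1_sub_sub_smul_e1 (by omega) p x y).trans_le hdist)⟩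

/-- If `d ≥ 2`, `1 ≤ p < k`, `k + p` is odd and `β = (k−p−1)/2`, then for `x, y ∈ T` with
`x₁ ≤ y₁` we have `|y₁ − p − x₁| + ∑_{i=2}^d |y_i − x_i| ≤ k`; in particular `x ∈ N(y, p, k)`. -/
theorem stmt13 (d : ℕ) (hd : 2 ≤ d) (p k : ℕ) (hp : 1 ≤ p) (hpk : p < k)
    (hodd : Odd (k + p)) (β : ℤ) (hβ : 2 * β = (k : ℤ) - (p : ℤ) - 1)
    (x y : Fin d → ℤ) (hx : x ∈ Tset d (p : ℤ) β) (hy : y ∈ Tset d (p : ℤ) β)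
    (hxy : coord x 0 ≤ coord y 0) :
    |coord y 0 - (p : ℤ) - coord x 0| + tailSum (y - x) ≤ (k : ℤ) ∧ inN p k y x :=
  stmt13_general d hd p k β hβ x y hx hy hxy
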